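/- arXiv:0812.3186 — 5 statements merged into one kernel-verified Lean document; each statement's English description precedes it below -/
import Mathlib

section
/- Let x be an infinite word over an alphabet of size k. Then liminf_{r→∞} C_{(0,r)} ≤ 1 − 1/k, where C_{(0,r)} = liminf_{N→∞} (1/N) Σ_{n<N} δ(n, n+r). -/
/-!
Fix a step `M` and `R ≥ 1`. For every `n`, the `R + 1` letters `x (n + i * M)`, `i ≤ R`, take at
most `k` values, so by Cauchy–Schwarz at least `(R + 1)² / k` of the ordered pairs among them agree.
Summing over `n < N` and pigeonholing over the `R (R + 1)` off-diagonal pairs, some shift `d * M`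
with `1 ≤ d ≤ R` has at most `(1 + 1/R)(1 - 1/k) N + R M` mismatches among its first `N` positions
(the `R M` accounts for the offset of the pair). Since `M` is arbitrary, the liminf over `r` is at
most `(1 + 1/R)(1 - 1/k)`; now let `R → ∞`.
-/

open Filter Finset Topology

section Collisions

variable {ι α : Type*} [DecidableEq α] {s : Finset ι} {t : Finset α} {f : ι → α}

theorem card_filter_product_eq_sum_sq (hf : Set.MapsTo f s t) :
    #{p ∈ s ×ˢ s | f p.1 = f p.2} = ∑ b ∈ t, #{i ∈ s | f i = b} ^ 2 := by
  have hfst : Set.MapsTo (fun p : ι × ι => f p.1) ↑{p ∈ s ×ˢ s | f p.1 = f p.2} t :=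
    fun p hp => hf (mem_product.1 (mem_filter.1 hp).1).1
  rw [card_eq_sum_card_fiberwise hfst]
  refine sum_congr rfl fun b _ => ?_
  rw [sq, ← card_product]
  congr 1
  ext ⟨i, j⟩
  simp only [mem_filter, mem_product]
  grind

theorem sq_card_le_card_mul_card_filter_product (hf : Set.MapsTo f s t) :
    #s ^ 2 ≤ #t * #{p ∈ s ×ˢ s | f p.1 = f p.2} := by
  rw [card_filter_product_eq_sum_sq hf, card_eq_sum_card_fiberwise hf]
  exact sq_sum_le_card_mul_sum_sq

theorem sum_offDiag_mismatch_le (hf : Set.MapsTo f s t) :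
    ∑ p ∈ s.offDiag, (if f p.1 = f p.2 then (0 : ℝ) else 1) ≤ #s ^ 2 * (1 - 1 / #t) := by
  have hdiag : ∑ p ∈ s.offDiag, (if f p.1 = f p.2 then (0 : ℝ) else 1)
      = ∑ p ∈ s ×ˢ s, (if f p.1 = f p.2 then (0 : ℝ) else 1) := by
    refine sum_subset (fun p hp => ?_) fun p hp hp' => ?_
    · obtain ⟨h1, h2, -⟩ := mem_offDiag.1 hp
      exact mem_product.2 ⟨h1, h2⟩
    · obtain ⟨h1, h2⟩ := mem_product.1 hp
      have : p.1 = p.2 := by simpa [mem_offDiag, h1, h2] using hp'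
      simp [this]
  have hcollisions : (#s : ℝ) ^ 2 / #t ≤ #{p ∈ s ×ˢ s | f p.1 = f p.2} :=
    div_le_of_le_mul₀ (by positivity) (by positivity) (by
      exact_mod_cast (sq_card_le_card_mul_card_filter_product hf).trans_eq (mul_comm _ _))
  rw [hdiag, sum_ite, sum_const_zero, sum_const, nsmul_one, zero_add]
  have hsplit : (#{p ∈ s ×ˢ s | f p.1 = f p.2} : ℝ) + #{p ∈ s ×ˢ s | ¬f p.1 = f p.2} = #s ^ 2 := by
    rw [sq]
    exact_mod_cast (card_filter_add_card_filter_not (fun p : ι × ι => f p.1 = f p.2)).trans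
      (card_product s s)
  have : (#s : ℝ) ^ 2 * (1 - 1 / #t) = #s ^ 2 - #s ^ 2 / #t := by ring
  linarith

end Collisions

section Words

variable {α : Type*} [DecidableEq α] (x : ℕ → α)

noncomputable def mismatchCount (r N : ℕ) : ℝ :=
  ∑ n ∈ range N, if x n = x (n + r) then 0 else 1

noncomputable def autocorrelation (r : ℕ) : ℝ :=
  liminf (fun N : ℕ => mismatchCount x r N / N) atTop

theorem mismatchCount_nonneg (r N : ℕ) : 0 ≤ mismatchCount x r N :=
  sum_nonneg fun _ _ => by split_ifs <;> norm_num

theorem mismatchCount_le (r N : ℕ) : mismatchCount x r N ≤ N :=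
  (sum_le_card_nsmul _ _ 1 fun _ _ => by split_ifs <;> norm_num).trans_eq (by simp)

theorem mismatchCount_mono (r : ℕ) : Monotone (mismatchCount x r) := fun _ _ h =>
  sum_le_sum_of_subset_of_nonneg (range_mono h) fun _ _ _ => by split_ifs <;> norm_num

theorem mismatchCount_le_sum_shift (r j N : ℕ) :
    mismatchCount x r N ≤ (∑ n ∈ range N, if x (n + j) = x (n + j + r) then 0 else 1) + j := by
  calc mismatchCount x r N ≤ mismatchCount x r (j + N) := mismatchCount_mono x r (by omega)
    _ = mismatchCount x r j + ∑ n ∈ range N, if x (j + n) = x (j + n + r) then 0 else 1 :=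
      sum_range_add _ j N
    _ ≤ j + ∑ n ∈ range N, if x (n + j) = x (n + j + r) then 0 else 1 := by
      simp_rw [add_comm j]
      gcongr
      exact mismatchCount_le x r j
    _ = _ := add_comm _ _

theorem mismatchCount_le_sum_of_lt (M N : ℕ) {i j : ℕ} (hij : i < j) :
    mismatchCount x ((j - i) * M) N
      ≤ (∑ n ∈ range N, if x (n + i * M) = x (n + j * M) then 0 else 1) + i * M := by
  have h : ∀ n, n + i * M + (j - i) * M = n + j * M := fun n => by
    rw [add_assoc, ← add_mul, Nat.add_sub_cancel' hij.le]
  simpa only [h, Nat.cast_mul] using mismatchCount_le_sum_shift x ((j - i) * M) (i * M) N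

theorem exists_mismatchCount_le_sum_of_ne (M N : ℕ) {R i j : ℕ} (hi : i ≤ R) (hj : j ≤ R)
    (hij : i ≠ j) : ∃ d ∈ Icc 1 R, mismatchCount x (d * M) N
      ≤ (∑ n ∈ range N, if x (n + i * M) = x (n + j * M) then 0 else 1) + R * M := by
  rcases hij.lt_or_gt with h | h
  · refine ⟨j - i, mem_Icc.2 ⟨by omega, by omega⟩, (mismatchCount_le_sum_of_lt x M N h).trans ?_⟩
    gcongr
  · refine ⟨i - j, mem_Icc.2 ⟨by omega, by omega⟩, (mismatchCount_le_sum_of_lt x M N h).trans ?_⟩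
    simp_rw [eq_comm (a := x (_ + j * M))]
    gcongr

theorem exists_mismatchCount_le {t : Finset α} (hx : ∀ n, x n ∈ t) (M : ℕ) {R : ℕ} (hR : 0 < R)
    (N : ℕ) : ∃ d ∈ Icc 1 R,
      mismatchCount x (d * M) N ≤ (1 + 1 / (R : ℝ)) * (1 - 1 / (#t : ℝ)) * N + R * M := by
  set D : ℕ × ℕ → ℝ := fun p => ∑ n ∈ range N, if x (n + p.1 * M) = x (n + p.2 * M) then 0 else 1
  have hsum : ∑ p ∈ (range (R + 1)).offDiag, D p
      ≤ ∑ _p ∈ (range (R + 1)).offDiag, (1 + 1 / (R : ℝ)) * (1 - 1 / (#t : ℝ)) * N := by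
    have hcard : #(range (R + 1)).offDiag = (R + 1) * R := by
      rw [offDiag_card, card_range, ← Nat.mul_sub_one, Nat.add_sub_cancel]
    calc ∑ p ∈ (range (R + 1)).offDiag, D p
        = ∑ n ∈ range N, ∑ p ∈ (range (R + 1)).offDiag,
            if x (n + p.1 * M) = x (n + p.2 * M) then (0 : ℝ) else 1 := sum_comm
      _ ≤ ∑ _n ∈ range N, ((R : ℝ) + 1) ^ 2 * (1 - 1 / #t) := by
        gcongr with n
        simpa using sum_offDiag_mismatch_le (s := range (R + 1)) (f := fun i => x (n + i * M))
          fun i _ => hx _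
      _ = _ := by
        simp only [sum_const, card_range, hcard, nsmul_eq_mul]
        push_cast
        field_simp
  obtain ⟨p, hp, hDp⟩ := exists_le_of_sum_le ⟨(0, 1), by simp [hR]⟩ hsum
  obtain ⟨hp1, hp2, hp12⟩ := mem_offDiag.1 hp
  obtain ⟨d, hd, hdp⟩ := exists_mismatchCount_le_sum_of_ne x M N
    (Nat.lt_succ_iff.1 (mem_range.1 hp1)) (Nat.lt_succ_iff.1 (mem_range.1 hp2)) hp12
  exact ⟨d, hd, hdp.trans (by gcongr)⟩

theorem mismatchCount_div_nonneg (r N : ℕ) : 0 ≤ mismatchCount x r N / N :=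
  div_nonneg (mismatchCount_nonneg x r N) N.cast_nonneg

theorem mismatchCount_div_le_one (r N : ℕ) : mismatchCount x r N / N ≤ 1 :=
  div_le_one_of_le₀ (mismatchCount_le x r N) N.cast_nonneg

theorem autocorrelation_nonneg (r : ℕ) : 0 ≤ autocorrelation x r :=
  le_liminf_of_le (isCoboundedUnder_ge_of_le atTop (mismatchCount_div_le_one x r))
    (Eventually.of_forall (mismatchCount_div_nonneg x r))

theorem exists_autocorrelation_le {t : Finset α} (hx : ∀ n, x n ∈ t) (M : ℕ) {R : ℕ} (hR : 0 < R) :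
    ∃ d ∈ Icc 1 R, autocorrelation x (d * M) ≤ (1 + 1 / (R : ℝ)) * (1 - 1 / (#t : ℝ)) := by
  set c : ℝ := (1 + 1 / (R : ℝ)) * (1 - 1 / (#t : ℝ))
  have hbound : ∀ᶠ N : ℕ in atTop, ∃ d ∈ Icc 1 R,
      mismatchCount x (d * M) N / N ≤ c + R * M / N := by
    filter_upwards [eventually_gt_atTop 0] with N hN
    obtain ⟨d, hd, h⟩ := exists_mismatchCount_le x hx M hR N
    refine ⟨d, hd, ?_⟩
    rw [div_le_iff₀ (by exact_mod_cast hN), add_mul, div_mul_cancel₀ _ (by positivity)]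
    exact h
  obtain ⟨d, hd, hfreq⟩ := (frequently_exists_finset _).1 hbound.frequently
  have hlim : Tendsto (fun N : ℕ => c + R * M / N) atTop (𝓝 c) := by
    simpa using tendsto_const_nhds.add (tendsto_const_div_atTop_nhds_zero_nat ((R : ℝ) * M))
  refine ⟨d, hd, ?_⟩
  calc autocorrelation x (d * M) ≤ limsup (fun N : ℕ => c + R * M / N) atTop :=
        liminf_le_limsup_of_frequently_le hfreq
          (isBoundedUnder_of ⟨0, mismatchCount_div_nonneg x (d * M)⟩) hlim.isBoundedUnder_le
    _ = c := hlim.limsup_eq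

theorem liminf_autocorrelation_le_of_pos {t : Finset α} (hx : ∀ n, x n ∈ t) {R : ℕ} (hR : 0 < R) :
    liminf (autocorrelation x) atTop ≤ (1 + 1 / (R : ℝ)) * (1 - 1 / (#t : ℝ)) := by
  refine liminf_le_of_frequently_le (frequently_atTop.2 fun M => ?_)
    (isBoundedUnder_of ⟨0, autocorrelation_nonneg x⟩)
  obtain ⟨d, hd, h⟩ := exists_autocorrelation_le x hx M hR
  exact ⟨d * M, Nat.le_mul_of_pos_left M (mem_Icc.1 hd).1, h⟩

theorem liminf_autocorrelation_le_one_sub_inv_card {t : Finset α} (hx : ∀ n, x n ∈ t) :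
    liminf (autocorrelation x) atTop ≤ 1 - 1 / (#t : ℝ) := by
  have hlim : Tendsto (fun R : ℕ => (1 + 1 / (R : ℝ)) * (1 - 1 / (#t : ℝ))) atTop
      (𝓝 (1 - 1 / (#t : ℝ))) := by
    simpa using ((tendsto_const_nhds (x := (1 : ℝ))).add
      tendsto_one_div_atTop_nhds_zero_nat).mul_const (1 - 1 / (#t : ℝ))
  exact ge_of_tendsto hlim ((eventually_gt_atTop 0).mono fun R hR =>
    liminf_autocorrelation_le_of_pos x hx hR)

end Words

theorem liminf_autocorrelation_le_general
    (k : ℕ) (x : ℕ → ℕ) (hx : ∀ n, x n < k) :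
    Filter.liminf (fun r : ℕ =>
        Filter.liminf (fun N : ℕ =>
          (∑ n ∈ Finset.range N, (if x n = x (n + r) then (0 : ℝ) else 1)) / N)
          Filter.atTop) Filter.atTop
      ≤ 1 - 1 / (k : ℝ) := by
  have h := liminf_autocorrelation_le_one_sub_inv_card x (t := range k) fun n => mem_range.2 (hx n)
  rwa [card_range] at h

/-- For any infinite word over an alphabet of size `k`,
`liminf_{r → ∞} C_{(0,r)} ≤ 1 - 1/k`. -/
theorem liminf_autocorrelation_le
    (k : ℕ) (hk : 0 < k) (x : ℕ → ℕ) (hx : ∀ n, x n < k) :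
    Filter.liminf (fun r : ℕ =>
        Filter.liminf (fun N : ℕ =>
          (∑ n ∈ Finset.range N, (if x n = x (n + r) then (0 : ℝ) else 1)) / N)
          Filter.atTop) Filter.atTop
      ≤ 1 - 1 / (k : ℝ) :=
  liminf_autocorrelation_le_general k x hx
end

section
/- Let x be an infinite word over an alphabet of size k and let m ≥ 2. Then for any norm ‖·‖ on ℝ^m, lim_{λ→∞} ( inf { C_r : r ∈ ℕ^m, r normalized, ‖r‖ ≥ λ } ) ≤ 1 − 1/k^{m−1}. (Equivalently: for every ε > 0 and every λ there exists a normalized r ∈ ℕ^m with ‖r‖ ≥ λ and C_r ≤ 1 − 1/k^{m−1} + ε.) -/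
/-!
Fix a spacing `T` and a window length `L`. For every `n`, the letters `x (n + T u)`, `u < L`,
take at most `k` values, so by convexity of `c ↦ c.choose m` about a fraction `1 / k^(m-1)` of the
`m`-subsets `J ⊆ [0, L)` are monochromatic. Double counting the pairs `(n, J)` then produces a
single `J` that is monochromatic at `n + T J` for a proportion `≥ 1 / k^(m-1) - ε` of the `n < N`,
for infinitely many `N`; translating `J` to start at `0` gives the normalized `r = T (J - min J)`.
There are only finitely many `J`, so a large `T` makes `‖r‖ ≥ λ` for all of them at once.
-/

open Filter Finset
open scoped Nat Topology

theorem pow_sum_sub_le_mul_sum_choose {ι : Type*} (s : Finset ι) (c : ι → ℕ) (m : ℕ) :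
    (∑ i ∈ s, c i - #s * m) ^ (m + 1) ≤ #s ^ m * (m + 1)! * ∑ i ∈ s, (c i).choose (m + 1) := by
  have hsub : ∑ i ∈ s, c i - #s * m ≤ ∑ i ∈ s, (c i - m) := by
    have : ∑ i ∈ s, c i ≤ ∑ i ∈ s, (c i - m + m) := sum_le_sum fun i _ => by omega
    rw [sum_add_distrib, sum_const, smul_eq_mul] at this
    omega
  calc (∑ i ∈ s, c i - #s * m) ^ (m + 1)
      ≤ (∑ i ∈ s, (c i - m)) ^ (m + 1) := Nat.pow_le_pow_left hsub _
    _ ≤ #s ^ m * ∑ i ∈ s, (c i - m) ^ (m + 1) :=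
        pow_sum_le_card_mul_sum_pow (fun _ _ => Nat.zero_le _) m
    _ ≤ #s ^ m * ∑ i ∈ s, (c i).descFactorial (m + 1) := by
        gcongr with i
        simpa using (c i).pow_sub_le_descFactorial (m + 1)
    _ = #s ^ m * (m + 1)! * ∑ i ∈ s, (c i).choose (m + 1) := by
        simp only [Nat.descFactorial_eq_factorial_mul_choose, ← mul_sum, mul_assoc]

theorem eventually_mul_factorial_mul_choose_le_pow_sub {δ : ℝ} (hδ : δ < 1) (m a : ℕ) :
    ∀ᶠ L : ℕ in atTop, δ * (m ! * L.choose m) ≤ ((L - a : ℕ) : ℝ) ^ m := by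
  have hlim : Tendsto (fun L : ℕ => (1 - (a : ℝ) / L) ^ m) atTop (𝓝 1) := by
    simpa using ((tendsto_const_div_atTop_nhds_zero_nat (a : ℝ)).const_sub 1).pow m
  filter_upwards [hlim.eventually_const_le (max_lt hδ one_pos), eventually_ge_atTop a,
    eventually_gt_atTop 0] with L hδL haL hL
  have hchoose : (m ! * L.choose m : ℝ) ≤ (L : ℝ) ^ m := by
    exact_mod_cast (Nat.descFactorial_eq_factorial_mul_choose L m).symm.trans_le
      (Nat.descFactorial_le_pow L m)
  have hsub : ((L - a : ℕ) : ℝ) ^ m = (L : ℝ) ^ m * (1 - a / L) ^ m := by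
    rw [Nat.cast_sub haL, ← mul_pow]
    field_simp
  calc δ * (m ! * L.choose m) ≤ max δ 0 * (m ! * L.choose m) := by gcongr; exact le_max_left _ _
    _ ≤ max δ 0 * (L : ℝ) ^ m := by gcongr
    _ ≤ (L : ℝ) ^ m * (1 - a / L) ^ m := by rw [mul_comm]; gcongr
    _ = ((L - a : ℕ) : ℝ) ^ m := hsub.symm

section Monochromatic

variable {α β : Type*} [DecidableEq β]

def monochromaticSubsets (f : α → β) (W : Finset α) (m : ℕ) : Finset (Finset α) :=
  {J ∈ powersetCard m W | ∀ u ∈ J, ∀ v ∈ J, f u = f v}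

theorem sum_choose_card_fiber_le_card_monochromaticSubsets (f : α → β) (W : Finset α)
    (K : Finset β) {m : ℕ} (hm : m ≠ 0) :
    ∑ b ∈ K, (#{a ∈ W | f a = b}).choose m ≤ #(monochromaticSubsets f W m) := by
  classical
  have hdisj : (K : Set β).PairwiseDisjoint fun b => powersetCard m {a ∈ W | f a = b} := by
    intro b _ b' _ hbb'
    refine disjoint_left.2 fun J hJ hJ' => hbb' ?_
    rw [mem_powersetCard] at hJ hJ'
    obtain ⟨u, hu⟩ := card_pos.1 (hJ.2 ▸ Nat.pos_of_ne_zero hm)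
    exact (mem_filter.1 (hJ.1 hu)).2.symm.trans (mem_filter.1 (hJ'.1 hu)).2
  calc ∑ b ∈ K, (#{a ∈ W | f a = b}).choose m
      = #(K.biUnion fun b => powersetCard m {a ∈ W | f a = b}) := by
        simp only [card_biUnion hdisj, card_powersetCard]
    _ ≤ #(monochromaticSubsets f W m) := by
        refine card_le_card fun J hJ => ?_
        obtain ⟨b, -, hJ⟩ := mem_biUnion.1 hJ
        obtain ⟨hJW, hJm⟩ := mem_powersetCard.1 hJ
        refine mem_filter.2 ⟨mem_powersetCard.2 ⟨hJW.trans (filter_subset _ _), hJm⟩, ?_⟩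
        intro u hu v hv
        rw [(mem_filter.1 (hJW hu)).2, (mem_filter.1 (hJW hv)).2]

theorem pow_card_sub_le_card_monochromaticSubsets (f : α → β) (W : Finset α) (K : Finset β)
    (hf : ∀ a ∈ W, f a ∈ K) (m : ℕ) :
    (#W - #K * m) ^ (m + 1) ≤ #K ^ m * (m + 1)! * #(monochromaticSubsets f W (m + 1)) := by
  rw [card_eq_sum_card_fiberwise hf]
  exact (pow_sum_sub_le_mul_sum_choose K _ m).trans <| Nat.mul_le_mul_left _ <|
    sum_choose_card_fiber_le_card_monochromaticSubsets f W K m.succ_ne_zero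

theorem eventually_mul_choose_le_card_monochromaticSubsets (K : Finset β) (hK : K.Nonempty)
    (m : ℕ) {γ : ℝ} (hγ : γ < 1 / #K ^ m) :
    ∀ᶠ L : ℕ in atTop, ∀ (W : Finset α) (f : α → β), #W = L → (∀ a ∈ W, f a ∈ K) →
      γ * L.choose (m + 1) ≤ #(monochromaticSubsets f W (m + 1)) := by
  have hKm : (0 : ℝ) < #K ^ m := by have := hK.card_pos; positivity
  have hδ : γ * #K ^ m < 1 := by rwa [lt_div_iff₀ hKm] at hγ
  filter_upwards [eventually_mul_factorial_mul_choose_le_pow_sub hδ (m + 1) (#K * m)]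
    with L hL W f hW hf
  have hcount : (((L - #K * m) ^ (m + 1) : ℕ) : ℝ) ≤
      #K ^ m * (m + 1)! * #(monochromaticSubsets f W (m + 1)) := by
    exact_mod_cast hW ▸ pow_card_sub_le_card_monochromaticSubsets f W K hf m
  have hpos : (0 : ℝ) < #K ^ m * (m + 1)! := by positivity
  refine le_of_mul_le_mul_left ?_ hpos
  push_cast at hcount
  nlinarith

end Monochromatic

theorem liminf_average_not_le_of_frequently (P : ℕ → Prop) [DecidablePred P] {β : ℝ}
    (h : ∃ᶠ N in atTop, β * N ≤ #{n ∈ range N | P n}) :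
    liminf (fun N : ℕ => (∑ n ∈ range N, if P n then (0 : ℝ) else 1) / N) atTop ≤ 1 - β := by
  have hsum : ∀ N, (∑ n ∈ range N, if P n then (0 : ℝ) else 1) = N - #{n ∈ range N | P n} := by
    intro N
    rw [eq_sub_iff_add_eq, ← sum_boole, ← sum_add_distrib]
    have h01 : ∀ n, ((if P n then (0 : ℝ) else 1) + if P n then 1 else 0) = 1 := fun n => by
      split_ifs <;> norm_num
    simp only [h01, sum_const, card_range, nsmul_eq_mul, mul_one]
  refine liminf_le_of_frequently_le ?_ (isBoundedUnder_of ⟨0, fun N => ?_⟩)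
  · refine (h.and_eventually (eventually_gt_atTop 0)).mono fun N ⟨hβN, hN⟩ => ?_
    rw [hsum, div_le_iff₀ (Nat.cast_pos.2 hN)]
    linarith
  · have : (#{n ∈ range N | P n} : ℝ) ≤ N := by
      exact_mod_cast (card_filter_le _ _).trans_eq (card_range N)
    simp only [hsum]
    exact div_nonneg (by linarith) N.cast_nonneg

theorem Seminorm.tendsto_natCast_smul_atTop {E : Type*} [AddCommGroup E] [Module ℝ E]
    (p : Seminorm ℝ E) {v : E} (hv : 0 < p v) :
    Tendsto (fun T : ℕ => p ((T : ℝ) • v)) atTop atTop := by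
  simp only [map_smul_eq_mul, Real.norm_natCast]
  exact tendsto_natCast_atTop_atTop.atTop_mul_const hv

theorem card_filter_add_le_card_filter_range (P : ℕ → Prop) [DecidablePred P] {c d : ℕ}
    (hcd : c ≤ d) (N : ℕ) :
    #{n ∈ range N | P (n + c)} ≤ #{n ∈ range (N + d) | P n} :=
  card_le_card_of_injOn (· + c) (fun n hn => by
    simp only [coe_filter, mem_range, Set.mem_ofPred_eq] at hn ⊢
    exact ⟨by omega, hn.2⟩) (fun _ _ _ _ h => Nat.add_right_cancel h)

section Offsets

variable {J : Finset ℕ} {m : ℕ} (hJ : #J = m)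

def offsetsFromMin (i : Fin m) : ℕ :=
  J.orderEmbOfFin hJ i - J.orderEmbOfFin hJ ⟨0, i.pos⟩

theorem offsetsFromMin_zero (h0 : 0 < m) : offsetsFromMin hJ ⟨0, h0⟩ = 0 :=
  Nat.sub_self _

theorem orderEmbOfFin_zero_add_offsetsFromMin (i : Fin m) :
    J.orderEmbOfFin hJ ⟨0, i.pos⟩ + offsetsFromMin hJ i = J.orderEmbOfFin hJ i :=
  Nat.add_sub_of_le ((J.orderEmbOfFin hJ).monotone (Nat.zero_le _))

theorem strictMono_offsetsFromMin : StrictMono (offsetsFromMin hJ) := fun i j hij => by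
  have hi := orderEmbOfFin_zero_add_offsetsFromMin hJ i
  have hj := orderEmbOfFin_zero_add_offsetsFromMin hJ j
  have := (J.orderEmbOfFin hJ).strictMono hij
  omega

theorem natCast_offsetsFromMin_ne_zero (hm : 1 < m) :
    (fun i => (offsetsFromMin hJ i : ℝ)) ≠ 0 := fun h => by
  have h01 := strictMono_offsetsFromMin hJ (show (⟨0, by omega⟩ : Fin m) < ⟨1, hm⟩ from Nat.one_pos)
  rw [offsetsFromMin_zero] at h01
  exact h01.ne' (by simpa using congrFun h ⟨1, hm⟩)

theorem card_monochromatic_le_card_offsetsFromMin (x : ℕ → ℕ) {L : ℕ} (hJL : J ⊆ range L)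
    (T N : ℕ) :
    #{n ∈ range N | ∀ u ∈ J, ∀ v ∈ J, x (n + T * u) = x (n + T * v)} ≤
      #{n ∈ range (N + T * L) | ∀ i j, x (n + T * offsetsFromMin hJ i) =
        x (n + T * offsetsFromMin hJ j)} := by
  rcases m.eq_zero_or_pos with rfl | hm
  · simp [card_eq_zero.1 hJ]
  set e0 := J.orderEmbOfFin hJ ⟨0, hm⟩
  have he0 : e0 < L := mem_range.1 (hJL (J.orderEmbOfFin_mem hJ _))
  refine (card_le_card fun n hn => ?_).trans
    (card_filter_add_le_card_filter_range _ (Nat.mul_le_mul_left T he0.le) N)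
  rw [mem_filter] at hn ⊢
  refine ⟨hn.1, fun i j => ?_⟩
  simp only [e0, add_assoc, ← mul_add, orderEmbOfFin_zero_add_offsetsFromMin]
  exact hn.2 _ (J.orderEmbOfFin_mem hJ i) _ (J.orderEmbOfFin_mem hJ j)

end Offsets

theorem exists_offsetsFromMin_frequently_monochromatic (x : ℕ → ℕ) {m L : ℕ} (hmL : m ≤ L)
    (T : ℕ) {β γ : ℝ} (hβγ : β < γ)
    (hmono : ∀ n, γ * L.choose m ≤ #(monochromaticSubsets (fun u => x (n + T * u)) (range L) m)) :
    ∃ J ⊆ range L, ∃ hJ : #J = m, ∃ᶠ N in atTop, β * N ≤ #{n ∈ range N | ∀ i j,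
      x (n + T * offsetsFromMin hJ i) = x (n + T * offsetsFromMin hJ j)} := by
  -- Otherwise, for one large `N`, counting the pairs `(n, J)` with `n < N` and `J` monochromatic
  -- at `n + T J` gives `N γ C(L, m) ≤ #pairs < β (N + T L) C(L, m)`.
  by_contra! H
  set Js := powersetCard m (range L)
  have hJs : Js.Nonempty := powersetCard_nonempty.2 (by simpa using hmL)
  have hcardJs : (#Js : ℝ) = L.choose m := by simp [Js]
  obtain ⟨N, hrare, hN⟩ : ∃ N : ℕ, (∀ J ∈ Js, ∀ hJ : #J = m,
      (#{n ∈ range (N + T * L) | ∀ i j, x (n + T * offsetsFromMin hJ i) =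
        x (n + T * offsetsFromMin hJ j)} : ℝ) < β * (N + T * L : ℕ)) ∧
      β * (T * L) < N * (γ - β) := by
    refine (Eventually.and ?_ ((tendsto_natCast_atTop_atTop.atTop_mul_const
      (sub_pos.2 hβγ)).eventually_gt_atTop _)).exists
    refine (eventually_all_finset Js).2 fun J hJs => ?_
    obtain ⟨hJL, hJ⟩ := mem_powersetCard.1 hJs
    exact (tendsto_add_atTop_nat (T * L)).eventually ((H J hJL hJ).mono fun _ h _ => h)
  have hdouble : ∑ n ∈ range N, #(monochromaticSubsets (fun u => x (n + T * u)) (range L) m) =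
      ∑ J ∈ Js, #{n ∈ range N | ∀ u ∈ J, ∀ v ∈ J, x (n + T * u) = x (n + T * v)} :=
    sum_card_bipartiteAbove_eq_sum_card_bipartiteBelow _
  have hlower : N * (γ * #Js) ≤
      ∑ n ∈ range N, (#(monochromaticSubsets (fun u => x (n + T * u)) (range L) m) : ℝ) := by
    simpa [hcardJs] using sum_le_sum fun n (_ : n ∈ range N) => hmono n
  have hupper : ∑ J ∈ Js, (#{n ∈ range N | ∀ u ∈ J, ∀ v ∈ J, x (n + T * u) = x (n + T * v)} : ℝ)
      < ∑ J ∈ Js, β * (N + T * L : ℕ) := by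
    refine sum_lt_sum_of_nonempty hJs fun J hJs => ?_
    obtain ⟨hJL, hJ⟩ := mem_powersetCard.1 hJs
    exact (Nat.cast_le.2 (card_monochromatic_le_card_offsetsFromMin hJ x hJL T N)).trans_lt
      (hrare J hJs hJ)
  rw [← Nat.cast_sum, hdouble, Nat.cast_sum] at hlower
  simp only [sum_const, nsmul_eq_mul, Nat.cast_add, Nat.cast_mul] at hupper
  have hJs0 : (0 : ℝ) < #Js := Nat.cast_pos.2 hJs.card_pos
  nlinarith

/-- For any infinite word over an alphabet of size `k`, any `m ≥ 2` and any
norm on `ℝ^m`, the limit as `λ → ∞` of `inf {C_r : r normalized, ‖r‖ ≥ λ}` is at most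
`1 - 1/k^(m-1)`; equivalently, for every `ε > 0` and every `λ` there is a normalized
`r ∈ ℕ^m` with `‖r‖ ≥ λ` and `C_r ≤ 1 - 1/k^(m-1) + ε`. -/
theorem correlation_inf_bound
    (k m : ℕ) (hk : 0 < k) (hm : 2 ≤ m) (x : ℕ → ℕ) (hx : ∀ n, x n < k)
    (nrm : (Fin m → ℝ) → ℝ)
    (nrm_add : ∀ a b, nrm (a + b) ≤ nrm a + nrm b)
    (nrm_smul : ∀ (c : ℝ) (a), nrm (c • a) = |c| * nrm a)
    (nrm_eq_zero : ∀ a, nrm a = 0 ↔ a = 0)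
    (ε : ℝ) (hε : 0 < ε) (lam : ℝ) :
    ∃ r : Fin m → ℕ, r ⟨0, by omega⟩ = 0 ∧ StrictMono r ∧
      lam ≤ nrm (fun i => (r i : ℝ)) ∧
      Filter.liminf (fun N : ℕ =>
          (∑ n ∈ Finset.range N,
            (if ∀ i j : Fin m, x (n + r i) = x (n + r j) then (0 : ℝ) else 1)) / N)
        Filter.atTop ≤ 1 - 1 / (k : ℝ) ^ (m - 1) + ε := by
  obtain ⟨d, rfl⟩ : ∃ d, m = d + 1 := ⟨m - 1, by omega⟩
  rw [Nat.add_sub_cancel]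
  let p : Seminorm ℝ (Fin (d + 1) → ℝ) :=
    Seminorm.of nrm nrm_add fun c a => by rw [nrm_smul, Real.norm_eq_abs]
  have hγ : 1 / (k : ℝ) ^ d - ε / 2 < 1 / #(range k) ^ d := by rw [card_range]; linarith
  obtain ⟨L, hmono, hL⟩ := ((eventually_mul_choose_le_card_monochromaticSubsets (α := ℕ)
    (range k) (nonempty_range_iff.2 hk.ne') d hγ).and (eventually_ge_atTop (d + 1))).exists
  have hnorm : ∀ J ∈ (range L).powerset, ∀ᶠ T : ℕ in atTop, ∀ hJ : #J = d + 1,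
      lam ≤ p ((T : ℝ) • fun i => (offsetsFromMin hJ i : ℝ)) := fun J _ =>
    eventually_all.2 fun hJ => (p.tendsto_natCast_smul_atTop ((apply_nonneg p _).lt_of_ne' fun h =>
      natCast_offsetsFromMin_ne_zero hJ (by omega) ((nrm_eq_zero _).1 h))).eventually_ge_atTop lam
  obtain ⟨T, hT, hlam⟩ :=
    ((eventually_gt_atTop 0).and ((eventually_all_finset _).2 hnorm)).exists
  obtain ⟨J, hJL, hJ, hfreq⟩ := exists_offsetsFromMin_frequently_monochromatic x hL T
    (β := 1 / (k : ℝ) ^ d - ε) (by linarith) fun n =>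
      hmono (range L) (fun u => x (n + T * u)) (card_range L) fun _ _ => mem_range.2 (hx _)
  refine ⟨fun i => T * offsetsFromMin hJ i, mul_eq_zero_of_right T (offsetsFromMin_zero hJ _),
    (strictMono_offsetsFromMin hJ).const_mul hT, ?_, ?_⟩
  · refine (hlam J (mem_powerset.2 hJL) hJ).trans_eq (congrArg nrm (funext fun i => ?_))
    simp
  · exact (liminf_average_not_le_of_frequently _ hfreq).trans_eq (by ring)
end

section
/- Suppose we have a multiset of n objects, each assigned one of k types, and let d ≤ n be a fixed positive integer. Then among the C(n,d) subsets of d objects, the number of subsets containing at least one pair of objects of different types is at most (n^d / d!) · (1 − 1/k^{d−1}). Equivalently, if b_1, …, b_k ≥ 0 are integers with b_1 + ⋯ + b_k = n, then C(n,d) − Σ_{i=1}^{k} C(b_i, d) ≤ (n^d / d!) · (1 − 1/k^{d−1}). -/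
/-!
Write `m^{(d)}` for the falling factorial `m (m - 1) ⋯ (m - d + 1)`, so that `C(m, d) = m^{(d)} / d!`.
The gap `m ^ d - m^{(d)}` (the number of non-injective maps `Fin d → Fin m`) is superadditive in `m`,
hence `n^{(d)} - ∑ᵢ bᵢ^{(d)} ≤ n ^ d - ∑ᵢ bᵢ ^ d`, and the power mean inequality
`∑ᵢ bᵢ ^ d ≥ n ^ d / k ^ (d - 1)` finishes the bound.
-/

open Finset

namespace Nat

theorem descFactorial_succ_add_mul_descFactorial (m d : ℕ) :
    m.descFactorial (d + 1) + d * m.descFactorial d = m * m.descFactorial d := by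
  rcases le_or_gt d m with h | h
  · rw [descFactorial_succ, ← add_mul, Nat.sub_add_cancel h]
  · simp [descFactorial_eq_zero_iff_lt.mpr h]

theorem descFactorial_add_descFactorial_le {d : ℕ} (hd : d ≠ 0) (a b : ℕ) :
    a.descFactorial d + b.descFactorial d ≤ (a + b).descFactorial d := by
  induction d with
  | zero => exact absurd rfl hd
  | succ d ih =>
    rcases eq_or_ne d 0 with rfl | hd'
    · simp
    simp only [descFactorial_succ]
    calc (a - d) * a.descFactorial d + (b - d) * b.descFactorial d
        ≤ (a + b - d) * (a.descFactorial d + b.descFactorial d) := by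
          rw [mul_add]; gcongr <;> omega
      _ ≤ (a + b - d) * (a + b).descFactorial d := Nat.mul_le_mul_left _ (ih hd')

theorem pow_succ_sub_descFactorial_succ (m d : ℕ) :
    m ^ (d + 1) - m.descFactorial (d + 1)
      = m * (m ^ d - m.descFactorial d) + d * m.descFactorial d := by
  have h := descFactorial_succ_add_mul_descFactorial m d
  have hle := Nat.mul_le_mul_left m (descFactorial_le_pow m d)
  rw [Nat.mul_sub, pow_succ', ← h]
  omega

theorem pow_sub_descFactorial_add_le (d a b : ℕ) :
    a ^ d - a.descFactorial d + (b ^ d - b.descFactorial d)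
      ≤ (a + b) ^ d - (a + b).descFactorial d := by
  induction d with
  | zero => simp
  | succ d ih =>
    simp only [pow_succ_sub_descFactorial_succ]
    have hdesc : d * (a.descFactorial d + b.descFactorial d) ≤ d * (a + b).descFactorial d := by
      rcases eq_or_ne d 0 with rfl | hd
      · simp
      · exact Nat.mul_le_mul_left _ (descFactorial_add_descFactorial_le hd a b)
    set ga := a ^ d - a.descFactorial d
    set gb := b ^ d - b.descFactorial d
    calc a * ga + d * a.descFactorial d + (b * gb + d * b.descFactorial d)
        ≤ (a + b) * (ga + gb) + d * (a.descFactorial d + b.descFactorial d) := by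
          nlinarith [Nat.zero_le (a * gb), Nat.zero_le (b * ga)]
      _ ≤ _ := add_le_add (Nat.mul_le_mul_left _ ih) hdesc

theorem sum_pow_sub_descFactorial_le {ι : Type*} (d : ℕ) (s : Finset ι) (b : ι → ℕ) :
    ∑ i ∈ s, (b i ^ d - (b i).descFactorial d)
      ≤ (∑ i ∈ s, b i) ^ d - (∑ i ∈ s, b i).descFactorial d := by
  classical
  induction s using Finset.induction_on with
  | empty => exact Nat.zero_le _
  | insert a s ha ih =>
    rw [sum_insert ha, sum_insert ha]
    exact (Nat.add_le_add_left ih _).trans (pow_sub_descFactorial_add_le d _ _)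

end Nat

theorem subsets_with_two_types_bound_general
    (k n d : ℕ) (hd : 0 < d)
    (b : Fin k → ℕ) (hb : ∑ i, b i = n) :
    ((n.choose d : ℝ) - ∑ i, ((b i).choose d : ℝ))
      ≤ (n : ℝ) ^ d / (d.factorial : ℝ) * (1 - 1 / (k : ℝ) ^ (d - 1)) := by
  have hchoose (m : ℕ) : (m.choose d : ℝ) = m.descFactorial d / d.factorial := by
    rw [Nat.descFactorial_eq_factorial_mul_choose]
    push_cast
    field_simp
  have hgap : (n.descFactorial d : ℝ) - ∑ i, ((b i).descFactorial d : ℝ)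
      ≤ (n : ℝ) ^ d - ∑ i, (b i : ℝ) ^ d := by
    have h := Nat.cast_le (α := ℝ) |>.mpr (Nat.sum_pow_sub_descFactorial_le d univ b)
    push_cast [hb, Nat.cast_sub (Nat.descFactorial_le_pow _ _), sum_sub_distrib] at h
    linarith
  have hpowMean : (n : ℝ) ^ d / (k : ℝ) ^ (d - 1) ≤ ∑ i, (b i : ℝ) ^ d := by
    obtain ⟨e, rfl⟩ := Nat.exists_eq_add_of_lt hd
    simpa [← Nat.cast_sum, hb] using
      pow_sum_div_card_le_sum_pow (s := univ) (f := fun i ↦ (b i : ℝ)) (fun _ _ ↦ by positivity) e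
  calc _ = ((n.descFactorial d : ℝ) - ∑ i, ((b i).descFactorial d : ℝ)) / d.factorial := by
        simp only [hchoose, ← sum_div, sub_div]
    _ ≤ ((n : ℝ) ^ d - (n : ℝ) ^ d / (k : ℝ) ^ (d - 1)) / d.factorial :=
        div_le_div_of_nonneg_right (by linarith) (by positivity)
    _ = _ := by ring

/-- Lemma 1: If `b₁ + ⋯ + b_k = n` are the multiplicities of the `k` types
among `n` objects and `0 < d ≤ n`, then the number of `d`-element subsets containing at
least one pair of objects of different types, namely `C(n,d) - ∑ᵢ C(bᵢ,d)`, is at most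
`(n^d / d!) · (1 - 1/k^(d-1))`. -/
theorem subsets_with_two_types_bound
    (k n d : ℕ) (hk : 0 < k) (hd : 0 < d) (hdn : d ≤ n)
    (b : Fin k → ℕ) (hb : ∑ i, b i = n) :
    ((n.choose d : ℝ) - ∑ i, ((b i).choose d : ℝ))
      ≤ (n : ℝ) ^ d / (d.factorial : ℝ) * (1 - 1 / (k : ℝ) ^ (d - 1)) :=
  subsets_with_two_types_bound_general k n d hd b hb
end

section
/- Let k be a prime, g an admissible function, (a(n))_{n≥0} an integer sequence with a(nk+j) = a(n) + g(j,n) for 0 ≤ j ≤ k−1 and n ≥ 1, and let 1 ≤ h ≤ k−1. Then for every function f : ℕ → ℤ periodic with period k, every integer i with 1 ≤ i ≤ k, and every integer N > k, | Σ_{n<N} e((h/k)(a(n+i) − a(n))) · e((h/k) f(n)) | ≤ (k²(k+3)/(2 log k)) · log(N/k) + k² + 2k − 1, where e(z) = e^{2πiz}. -/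
open Finset Real

/-- `e(z) = exp(2πiz)`. -/
noncomputable def e (z : ℝ) : ℂ := Complex.exp (2 * Real.pi * Complex.I * z)

/-- A function `g : {0,…,k-1} × ℤ → ℤ` (encoded as `g : ℕ → ℤ → ℤ`), periodic in its
second argument with period `k`, is admissible if for all `0 ≤ u < u + i ≤ k - 1` the set
`{(g(u+i,n) - g(u,n)) mod k : 0 ≤ n ≤ k-1}` equals `{0,1,…,k-1}`. -/
def Admissible (k : ℕ) (g : ℕ → ℤ → ℤ) : Prop :=
  (∀ (j : ℕ) (n : ℤ), g j (n + k) = g j n) ∧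
  (∀ u i : ℕ, 0 < i → u + i ≤ k - 1 → ∀ c : ℕ, c < k →
    ∃ n : ℕ, n < k ∧ (g (u + i) (n : ℤ) - g u (n : ℤ)) % (k : ℤ) = (c : ℤ))

/-!
The summand is `ψ (a (n + i) - a n + f n)` for the nontrivial additive character
`ψ = e (h · / k)` of `ZMod k`. Write `n = m k + j`. If `j + i < k`, the recurrence turns it into
`ψ (g (j + i) m - g j m + f j)`; by admissibility the differences run through all residues over
one period of `m`, so the sum over `m` cancels period by period and is at most `k / 2`. If
`j + i ≥ k` there is a carry and it becomes `ψ (a (m + 1) - a m + F m)` with `F` periodic: a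
shift-one sum of length about `N / k`. Iterating on shift-one sums costs at most `k (k + 3) / 2`
per level over `log_k N` levels.
-/

section PeriodicSums

variable {E : Type*} [SeminormedAddCommGroup E]

theorem norm_sum_le_card {ι : Type*} {s : Finset ι} {f : ι → E} (hf : ∀ x ∈ s, ‖f x‖ ≤ 1) :
    ‖∑ x ∈ s, f x‖ ≤ #s := by
  simpa using norm_sum_le_of_le s hf

variable {W : ℕ → E} {k : ℕ}

theorem Function.Periodic.mul_add_eq {α : Type*} {F : ℕ → α} (hF : Function.Periodic F k)
    (m j : ℕ) : F (m * k + j) = F j := by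
  simpa [add_comm] using hF.nat_mul m j

theorem Function.Periodic.sum_Ico_add_eq_sum_range (hW : Function.Periodic W k) (a : ℕ) :
    ∑ m ∈ Ico a (a + k), W m = ∑ m ∈ range k, W m := by
  induction a with
  | zero => rw [zero_add, range_eq_Ico]
  | succ a ih =>
    have h := sum_eq_sum_Ico_succ_bot (show a < a + k + 1 by omega) W
    rw [sum_Ico_succ_top (by omega : a ≤ a + k), hW a, ih, add_comm] at h
    rw [add_right_comm, ← add_left_cancel h]

theorem Function.Periodic.sum_Ico_add_mul_eq_zero (hW : Function.Periodic W k)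
    (h0 : ∑ m ∈ range k, W m = 0) (a q : ℕ) : ∑ m ∈ Ico a (a + q * k), W m = 0 := by
  induction q with
  | zero => simp
  | succ q ih =>
    rw [← sum_Ico_consecutive _ (by omega : a ≤ a + q * k)
      (by nlinarith : a + q * k ≤ a + (q + 1) * k), ih, zero_add,
      show a + (q + 1) * k = a + q * k + k by ring, hW.sum_Ico_add_eq_sum_range, h0]

/-- After cancelling whole periods `r < k` terms remain, and their sum is minus the sum of the
other `k - r` terms of that period: so it is bounded both by `r` and by `k - r`. -/
theorem Function.Periodic.norm_sum_Ico_le_half (hW : Function.Periodic W k) (hk : 0 < k)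
    (hW1 : ∀ m, ‖W m‖ ≤ 1) (h0 : ∑ m ∈ range k, W m = 0) (A B : ℕ) :
    ‖∑ m ∈ Ico A B, W m‖ ≤ k / 2 := by
  rcases le_or_gt B A with hBA | hAB
  · rw [Ico_eq_empty_of_le hBA, sum_empty, norm_zero]
    positivity
  set r := (B - A) % k
  have hr : r < k := Nat.mod_lt _ hk
  have hB : B = A + r + (B - A) / k * k := by have := Nat.mod_add_div (B - A) k; grind
  have hS : ∑ m ∈ Ico A B, W m = ∑ m ∈ Ico A (A + r), W m := by
    rw [← sum_Ico_consecutive _ (by omega : A ≤ A + r) (by omega : A + r ≤ B), hB,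
      hW.sum_Ico_add_mul_eq_zero h0, add_zero]
  have hcompl : ∑ m ∈ Ico A (A + r), W m = -∑ m ∈ Ico (A + r) (A + k), W m := by
    rw [eq_neg_iff_add_eq_zero, sum_Ico_consecutive _ (by omega) (by omega),
      hW.sum_Ico_add_eq_sum_range, h0]
  have h1 : ‖∑ m ∈ Ico A B, W m‖ ≤ r := by
    simpa [hS] using norm_sum_le_card (s := Ico A (A + r)) fun m _ ↦ hW1 m
  have h2 : ‖∑ m ∈ Ico A B, W m‖ ≤ (k : ℝ) - r := by
    rw [hS, hcompl, norm_neg, ← Nat.cast_sub hr.le]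
    simpa [show A + k - (A + r) = k - r by omega] using
      norm_sum_le_card (s := Ico (A + r) (A + k)) fun m _ ↦ hW1 m
  linarith

theorem sum_Ico_mul_eq_sum_sum {M : Type*} [AddCommMonoid M] (G : ℕ → M) {c d : ℕ}
    (hcd : c ≤ d) :
    ∑ n ∈ Ico (c * k) (d * k), G n = ∑ m ∈ Ico c d, ∑ j ∈ range k, G (m * k + j) := by
  induction d, hcd using Nat.le_induction with
  | base => simp
  | succ d hcd ih =>
    rw [← sum_Ico_consecutive _ (Nat.mul_le_mul_right k hcd) (by nlinarith), ih,
      sum_Ico_succ_top hcd, add_one_mul, sum_Ico_eq_sum_range G (d * k), Nat.add_sub_cancel_left]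

end PeriodicSums

theorem Admissible.exists_intCast_sub_eq {k : ℕ} [NeZero k] {g : ℕ → ℤ → ℤ}
    (hg : Admissible k g) {u i : ℕ} (hi : 0 < i) (hui : u + i ≤ k - 1) (c : ZMod k) :
    ∃ m < k, ((g (u + i) m - g u m : ℤ) : ZMod k) = c := by
  obtain ⟨m, hm, hmc⟩ := hg.2 u i hi hui c.val c.val_lt
  exact ⟨m, hm, by rw [← ZMod.intCast_mod, hmc, Int.cast_natCast, ZMod.natCast_zmod_val]⟩

section Characters

variable {k : ℕ} [Fact (1 < k)] {ψ : AddChar (ZMod k) ℂ}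

theorem AddChar.sum_range_comp_eq_zero (hψ : ψ ≠ 1) {D : ℕ → ZMod k}
    (hD : ∀ c, ∃ m < k, D m = c) : ∑ m ∈ range k, ψ (D m) = 0 := by
  have hbij : Function.Bijective fun m : Fin k ↦ D m := by
    refine (Fintype.bijective_iff_surjective_and_card _).2 ⟨fun c ↦ ?_, by simp⟩
    obtain ⟨m, hm, rfl⟩ := hD c
    exact ⟨⟨m, hm⟩, rfl⟩
  rw [sum_range fun m ↦ ψ (D m), hbij.sum_comp ψ, AddChar.sum_eq_zero_of_ne_one hψ]

theorem Admissible.norm_sum_Ico_le_half {g : ℕ → ℤ → ℤ} (hg : Admissible k g) (hψ : ψ ≠ 1)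
    {u i : ℕ} (hi : 0 < i) (hui : u + i ≤ k - 1) (c : ℤ) (A B : ℕ) :
    ‖∑ m ∈ Ico A B, ψ ((g (u + i) m - g u m + c : ℤ) : ZMod k)‖ ≤ k / 2 := by
  refine Function.Periodic.norm_sum_Ico_le_half (fun m ↦ ?_) (by omega)
    (fun m ↦ (ψ.norm_apply _).le) ?_ A B
  · simp only [Nat.cast_add, hg.1]
  · simp only [Int.cast_add, AddChar.map_add_eq_mul, ← sum_mul]
    rw [AddChar.sum_range_comp_eq_zero hψ (hg.exists_intCast_sub_eq hi hui), zero_mul]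

end Characters

section DigitRecurrence

variable {k : ℕ} {g : ℕ → ℤ → ℤ} {a : ℕ → ℤ}
  (ha : ∀ n : ℕ, 1 ≤ n → ∀ j : ℕ, j < k → a (n * k + j) = a n + g j (n : ℤ))
  {F : ℕ → ℤ} (hF : Function.Periodic F k)
include ha hF

theorem shift_digit_of_add_lt {m j i : ℕ} (hm : 1 ≤ m) (hji : j + i < k) :
    a (m * k + j + i) - a (m * k + j) + F (m * k + j) = g (j + i) m - g j m + F j := by
  rw [add_assoc, ha m hm _ hji, ha m hm j (by omega), hF.mul_add_eq]
  ring

theorem shift_digit_of_carry {m x i : ℕ} (hm : 1 ≤ m) (hx : x < i) (hik : i ≤ k) :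
    a (m * k + (k - i + x) + i) - a (m * k + (k - i + x)) + F (m * k + (k - i + x)) =
      a (m + 1) - a m + (g x (m + 1 : ℕ) - g (k - i + x) m + F (k - i + x)) := by
  rw [show m * k + (k - i + x) + i = (m + 1) * k + x by rw [add_one_mul]; omega,
    ha (m + 1) (by omega) x (by omega), ha m hm _ (by omega), hF.mul_add_eq]
  ring

end DigitRecurrence

section ShiftSums

variable {k : ℕ} [Fact (1 < k)] {ψ : AddChar (ZMod k) ℂ} (hψ : ψ ≠ 1) {g : ℕ → ℤ → ℤ}
  (hg : Admissible k g) {a : ℕ → ℤ}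
  (ha : ∀ n : ℕ, 1 ≤ n → ∀ j : ℕ, j < k → a (n * k + j) = a n + g j (n : ℤ))
include hψ hg ha

theorem norm_sum_shift_le {i : ℕ} (hi : 1 ≤ i) (hik : i ≤ k) {F : ℕ → ℤ}
    (hF : Function.Periodic F k) {M : ℕ} (hkM : k ≤ M) {β : ℝ}
    (hβ : ∀ F' : ℕ → ℤ, Function.Periodic F' k →
      ‖∑ m ∈ Ico 1 (M / k), ψ ((a (m + 1) - a m + F' m : ℤ) : ZMod k)‖ ≤ β) :
    ‖∑ n ∈ Ico 1 M, ψ ((a (n + i) - a n + F n : ℤ) : ZMod k)‖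
      ≤ 2 * (k - 1) + (k - i) * (k / 2) + i * β := by
  have hk : 1 < k := Fact.out
  set G : ℕ → ℂ := fun n ↦ ψ ((a (n + i) - a n + F n : ℤ) : ZMod k)
  set Q := M / k
  set S : ℕ → ℂ := fun j ↦ ∑ m ∈ Ico 1 Q, G (m * k + j)
  have hQ : 1 ≤ Q := (Nat.one_le_div_iff (by omega)).2 hkM
  have hM : M < Q * k + k := Nat.lt_div_mul_add (by omega)
  have hsplit : ∑ n ∈ Ico 1 M, G n = (∑ n ∈ Ico 1 k, G n + ∑ n ∈ Ico (Q * k) M, G n)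
      + (∑ j ∈ range (k - i), S j + ∑ x ∈ range i, S (k - i + x)) := by
    have hgrid := sum_Ico_mul_eq_sum_sum (k := k) G hQ
    rw [one_mul] at hgrid
    rw [← sum_range_add, Nat.sub_add_cancel hik, ← sum_Ico_consecutive G (by omega : 1 ≤ Q * k)
      (Nat.div_mul_le_self M k), ← sum_Ico_consecutive G (by omega : 1 ≤ k) (by nlinarith),
      hgrid, sum_comm]
    abel
  have hedge : ‖∑ n ∈ Ico 1 k, G n + ∑ n ∈ Ico (Q * k) M, G n‖ ≤ 2 * (k - 1) := by
    have hG : ∀ n, ‖G n‖ ≤ 1 := fun n ↦ (ψ.norm_apply _).le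
    have h1 := norm_sum_le_card (s := Ico 1 k) fun n _ ↦ hG n
    have h2 := norm_sum_le_card (s := Ico (Q * k) M) fun n _ ↦ hG n
    have h3 : ((M - Q * k : ℕ) : ℝ) ≤ k - 1 := by
      rw [le_sub_iff_add_le]; exact_mod_cast (by omega : M - Q * k + 1 ≤ k)
    rw [Nat.card_Ico] at h1 h2
    push_cast [Nat.cast_sub hk.le] at h1
    linarith [norm_add_le (∑ n ∈ Ico 1 k, G n) (∑ n ∈ Ico (Q * k) M, G n)]
  have hgood : ∀ j ∈ range (k - i), ‖S j‖ ≤ k / 2 := by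
    intro j hj
    have hji : j + i < k := by rw [mem_range] at hj; omega
    have heq : ∀ m ∈ Ico 1 Q, G (m * k + j) = ψ ((g (j + i) m - g j m + F j : ℤ) : ZMod k) :=
      fun m hm ↦ by simp only [G]; rw [shift_digit_of_add_lt ha hF (mem_Ico.1 hm).1 hji]
    simp only [S]
    rw [sum_congr rfl heq]
    exact hg.norm_sum_Ico_le_half hψ (by omega) (by omega) _ _ _
  have hcarry : ∀ x ∈ range i, ‖S (k - i + x)‖ ≤ β := by
    intro x hx
    have heq : ∀ m ∈ Ico 1 Q, G (m * k + (k - i + x)) = ψ ((a (m + 1) - a m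
        + (g x (m + 1 : ℕ) - g (k - i + x) m + F (k - i + x)) : ℤ) : ZMod k) := fun m hm ↦ by
      simp only [G]; rw [shift_digit_of_carry ha hF (mem_Ico.1 hm).1 (mem_range.1 hx) hik]
    simp only [S]
    rw [sum_congr rfl heq]
    refine hβ _ fun m ↦ ?_
    simp only [Nat.cast_add, add_right_comm _ (k : ℤ), hg.1]
  have hS₁ := norm_sum_le_of_le _ hgood
  have hS₂ := norm_sum_le_of_le _ hcarry
  rw [sum_const, card_range, nsmul_eq_mul, Nat.cast_sub hik] at hS₁
  rw [sum_const, card_range, nsmul_eq_mul] at hS₂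
  rw [hsplit]
  refine (norm_add_le _ _).trans ?_
  linarith [norm_add_le (∑ j ∈ range (k - i), S j) (∑ x ∈ range i, S (k - i + x))]

theorem norm_sum_shift_one_le (M : ℕ) {F : ℕ → ℤ} (hF : Function.Periodic F k) :
    ‖∑ m ∈ Ico 1 M, ψ ((a (m + 1) - a m + F m : ℤ) : ZMod k)‖
      ≤ k * (k + 3) / 2 * Nat.log k M + k := by
  have hk : 1 < k := Fact.out
  induction M using Nat.strong_induction_on generalizing F with
  | _ M ih =>
  rcases lt_or_ge M k with hMk | hkM
  · have h := norm_sum_le_card (s := Ico 1 M) fun m _ ↦ (ψ.norm_apply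
      ((a (m + 1) - a m + F m : ℤ) : ZMod k)).le
    have hM : ((#(Ico 1 M) : ℕ) : ℝ) ≤ k := by rw [Nat.card_Ico]; exact_mod_cast (by omega)
    have : (0 : ℝ) ≤ k * (k + 3) / 2 * Nat.log k M := by positivity
    linarith
  · have hlog : Nat.log k M = Nat.log k (M / k) + 1 := by
      rw [Nat.log_div_base]; have := Nat.log_pos hk hkM; omega
    refine (norm_sum_shift_le hψ hg ha le_rfl hk.le hF hkM
      fun F' hF' ↦ ih (M / k) (Nat.div_lt_self (by omega) hk) hF').trans ?_
    rw [hlog]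
    push_cast
    nlinarith

end ShiftSums

theorem e_div_mul_eq_stdAddChar (k h : ℕ) [NeZero k] (d : ℤ) :
    e (h / k * d) = (ZMod.stdAddChar.mulShift (h : ZMod k)) d := by
  rw [AddChar.mulShift_apply, show (h : ZMod k) * d = ((h * d : ℤ) : ZMod k) by push_cast; rfl,
    ZMod.stdAddChar_coe, e]
  push_cast
  ring_nf

theorem gamma_small_shift_bound_general
    (k : ℕ) (g : ℕ → ℤ → ℤ) (hg : Admissible k g)
    (a : ℕ → ℤ)
    (ha : ∀ n : ℕ, 1 ≤ n → ∀ j : ℕ, j < k → a (n * k + j) = a n + g j (n : ℤ))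
    (h : ℕ) (hh1 : 1 ≤ h) (hh2 : h ≤ k - 1)
    (f : ℕ → ℤ) (hf : ∀ n, f (n + k) = f n)
    (i : ℕ) (hi1 : 1 ≤ i) (hi2 : i ≤ k)
    (N : ℕ) (hN : k < N) :
    ‖∑ n ∈ Finset.range N,
        e ((h : ℝ) / (k : ℝ) * ((a (n + i) - a n : ℤ) : ℝ))
          * e ((h : ℝ) / (k : ℝ) * ((f n : ℤ) : ℝ))‖
      ≤ (k : ℝ) ^ 2 * (k + 3) / (2 * Real.log k) * Real.log ((N : ℝ) / k)
        + (k : ℝ) ^ 2 + 2 * k - 1 := by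
  have : Fact (1 < k) := ⟨by omega⟩
  set ψ : AddChar (ZMod k) ℂ := ZMod.stdAddChar.mulShift (h : ZMod k)
  have hψ : ψ ≠ 1 := ZMod.isPrimitive_stdAddChar k <| (ZMod.natCast_eq_zero_iff h k).not.2 <|
    Nat.not_dvd_of_pos_of_lt (by omega) (by omega)
  have hterm : ∀ n, e (h / k * (a (n + i) - a n : ℤ)) * e (h / k * f n)
      = ψ ((a (n + i) - a n + f n : ℤ) : ZMod k) := fun n ↦ by
    rw [e_div_mul_eq_stdAddChar, e_div_mul_eq_stdAddChar, Int.cast_add, AddChar.map_add_eq_mul]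
  have hsum := norm_sum_shift_le hψ hg ha hi1 hi2 hf hN.le
    fun F' hF' ↦ norm_sum_shift_one_le hψ hg ha (N / k) hF'
  have hlog : (Nat.log k (N / k) : ℝ) ≤ Real.log (N / k) / Real.log k := by
    rw [Real.log_div_log]
    refine (Real.natLog_le_logb _ _).trans (Real.logb_le_logb_of_le (by exact_mod_cast this.out)
      (by exact_mod_cast Nat.div_pos hN.le (by omega)) Nat.cast_div_le)
  have hlogk : 0 < Real.log k := Real.log_pos (by exact_mod_cast this.out)
  simp_rw [hterm, range_eq_Ico, sum_eq_sum_Ico_succ_bot (by omega : 0 < N), zero_add]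
  refine (norm_add_le _ _).trans ?_
  rw [ψ.norm_apply]
  have hik : (i : ℝ) ≤ k := by exact_mod_cast hi2
  have hC : (i : ℝ) * (k * (k + 3) / 2 * Nat.log k (N / k))
      ≤ k ^ 2 * (k + 3) / (2 * Real.log k) * Real.log (N / k) := calc
    _ ≤ k * (k * (k + 3) / 2 * (Real.log (N / k) / Real.log k)) := by gcongr
    _ = _ := by field_simp
  nlinarith

/-- For `k` prime, `g` admissible, `a(nk+j) = a(n) + g(j,n)`,
`1 ≤ h ≤ k-1`, every `k`-periodic `f : ℕ → ℤ`, every `1 ≤ i ≤ k` and every `N > k`,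
`|Σ_{n<N} e((h/k)(a(n+i) - a(n))) e((h/k) f(n))|
  ≤ (k²(k+3)/(2 log k)) log(N/k) + k² + 2k - 1`. -/
theorem gamma_small_shift_bound
    (k : ℕ) (hk : k.Prime) (g : ℕ → ℤ → ℤ) (hg : Admissible k g)
    (a : ℕ → ℤ)
    (ha : ∀ n : ℕ, 1 ≤ n → ∀ j : ℕ, j < k → a (n * k + j) = a n + g j (n : ℤ))
    (h : ℕ) (hh1 : 1 ≤ h) (hh2 : h ≤ k - 1)
    (f : ℕ → ℤ) (hf : ∀ n, f (n + k) = f n)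
    (i : ℕ) (hi1 : 1 ≤ i) (hi2 : i ≤ k)
    (N : ℕ) (hN : k < N) :
    ‖∑ n ∈ Finset.range N,
        e ((h : ℝ) / (k : ℝ) * ((a (n + i) - a n : ℤ) : ℝ))
          * e ((h : ℝ) / (k : ℝ) * ((f n : ℤ) : ℝ))‖
      ≤ (k : ℝ) ^ 2 * (k + 3) / (2 * Real.log k) * Real.log ((N : ℝ) / k)
        + (k : ℝ) ^ 2 + 2 * k - 1 :=
  gamma_small_shift_bound_general k g hg a ha h hh1 hh2 f hf i hi1 hi2 N hN
end

section
/- Let k be a prime and let (â(n))_{n≥0} be a generalized Rudin-Shapiro sequence over {0,1,…,k−1} with admissible function g. Then inf_{r > 0} C_{(0,r)} = 1 − 1/k, where C_{(0,r)} = liminf_{N→∞} (1/N) Σ_{n<N} δ(n, n+r). -/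
open Finset Filter Real

/-- `(â(n))` is a generalized Rudin–Shapiro sequence over `{0,…,k-1}` (with companion
integer sequence `a` and admissible function `g`). -/
def IsGenRudinShapiro (k : ℕ) (g : ℕ → ℤ → ℤ) (a : ℕ → ℤ) (ahat : ℕ → ℕ) : Prop :=
  (∀ n, ahat n < k) ∧
  (∀ n, ((ahat n : ℤ)) % (k : ℤ) = a n % (k : ℤ)) ∧
  (∀ n : ℕ, 1 ≤ n → ∀ j : ℕ, j < k → a (n * k + j) = a n + g j (n : ℤ))

/-!
Write `d_e(n) = a(n + e) - a(n)` in `ZMod k` (`shiftDiff`). For `n = m k + c` with `m ≥ 1` the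
digit recursion gives `d_e(m k + c) = d_{e'}(m) + h(m mod k)`, with carry `e' = (c + e) / k` and
`h` (`carryTerm`) a difference of two values of `g`. Without carry, admissibility makes
`m mod k ↦ h` a bijection onto `ZMod k`, so on a block of `k ^ (s + 1)` consecutive `m` every
value of `d_e` occurs exactly `k ^ s` times. A carry satisfies `e' < e`, except for `e = e' = 1`,
`c = k - 1`, and then at the next level only the digit `k - 1` carries again; by induction on the
block length the error stays below `k ^ e`. Hence every value of `d_e` has density `1 / k`, and
`d_e(n) = 0` means `â(n) = â(n + e)`.
-/
open Topology

theorem Nat.card_Ico_mul_succ_mul (q L : ℕ) : #(Ico (q * L) ((q + 1) * L)) = L := by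
  rw [Nat.card_Ico, add_mul, one_mul, Nat.add_sub_cancel_left]

theorem Finset.card_filter_Ico_mul_eq_sum {k : ℕ} (hk : 0 < k) (A B : ℕ) (P : ℕ → Prop)
    [DecidablePred P] :
    #{m ∈ Ico (A * k) (B * k) | P m} = ∑ c ∈ range k, #{m ∈ Ico A B | P (m * k + c)} := by
  have hdiv {m c : ℕ} (hc : c < k) : (m * k + c) / k = m := by
    rw [Nat.mul_comm, Nat.mul_add_div hk, Nat.div_eq_of_lt hc, add_zero]
  have hprod : #{m ∈ Ico (A * k) (B * k) | P m} =
      #{p ∈ range k ×ˢ Ico A B | P (p.2 * k + p.1)} := by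
    refine card_nbij' (fun m => (m % k, m / k)) (fun p => p.2 * k + p.1) ?_ ?_ ?_ ?_
    · intro m hm
      simp only [coe_filter, mem_Ico, Set.mem_ofPred_eq, mem_product, mem_range] at hm ⊢
      refine ⟨⟨Nat.mod_lt _ hk, (Nat.le_div_iff_mul_le hk).2 hm.1.1,
        (Nat.div_lt_iff_lt_mul hk).2 hm.1.2⟩, ?_⟩
      rw [Nat.div_add_mod']; exact hm.2
    · rintro ⟨c, m⟩ h
      simp only [coe_filter, mem_Ico, Set.mem_ofPred_eq, mem_product, mem_range] at h ⊢
      exact ⟨⟨by nlinarith, by nlinarith⟩, h.2⟩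
    · intro m _
      exact Nat.div_add_mod' m k
    · rintro ⟨c, m⟩ h
      simp only [coe_filter, mem_Ico, Set.mem_ofPred_eq, mem_product, mem_range] at h
      simp [Nat.mul_add_mod_of_lt h.1.1, hdiv h.1.1]
  rw [hprod, card_filter, sum_product]
  simp only [card_filter]

theorem Finset.abs_sum_sub_card_mul_le {ι : Type*} (s : Finset ι) (x : ι → ℤ) (y : ℤ) :
    |∑ i ∈ s, x i - #s * y| ≤ ∑ i ∈ s, |x i - y| := by
  simpa [sum_sub_distrib] using abs_sum_le_sum_abs (fun i => x i - y) s

section Averages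

variable {f : ℕ → ℝ} {M : ℝ}

theorem abs_sum_Ico_le_mul (hM : ∀ n, |f n| ≤ M) (m n : ℕ) :
    |∑ i ∈ Ico m n, f i| ≤ (n - m : ℕ) * M :=
  calc |∑ i ∈ Ico m n, f i| ≤ ∑ i ∈ Ico m n, |f i| := abs_sum_le_sum_abs _ _
    _ ≤ ∑ _i ∈ Ico m n, M := sum_le_sum fun i _ => hM i
    _ = (n - m : ℕ) * M := by rw [sum_const, Nat.card_Ico, nsmul_eq_mul]

theorem abs_sum_range_le_of_block_sums (hM : ∀ n, |f n| ≤ M) {ε : ℝ} (hε : 0 ≤ ε) {L : ℕ}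
    (hL : 1 ≤ L) (hblock : ∀ q ≥ 1, |∑ n ∈ Ico (q * L) ((q + 1) * L), f n| ≤ ε * L) (N : ℕ) :
    |∑ n ∈ range N, f n| ≤ 2 * L * M + ε * N := by
  have hM0 : 0 ≤ M := (abs_nonneg _).trans (hM 0)
  have hsplit : ∀ {m n : ℕ}, m ≤ n →
      ∑ i ∈ range n, f i = ∑ i ∈ range m, f i + ∑ i ∈ Ico m n, f i :=
    fun h => (sum_range_add_sum_Ico f h).symm
  have hmult : ∀ Q : ℕ, |∑ n ∈ range (Q * L), f n| ≤ L * M + ε * (Q * L : ℕ) := by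
    intro Q
    induction Q with
    | zero => simpa using by positivity
    | succ Q ih =>
      rcases Nat.eq_zero_or_pos Q with rfl | hQ
      · have := abs_sum_Ico_le_mul hM 0 L
        simp only [zero_add, one_mul, range_eq_Ico, Nat.sub_zero] at this ⊢
        nlinarith
      · rw [hsplit (Nat.mul_le_mul_right L (Nat.le_succ Q))]
        have := hblock Q hQ
        push_cast at ih ⊢
        calc _ ≤ |∑ n ∈ range (Q * L), f n| + |∑ n ∈ Ico (Q * L) ((Q + 1) * L), f n| :=
              abs_add_le _ _
          _ ≤ L * M + ε * (Q * L) + ε * L := add_le_add ih this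
          _ = L * M + ε * ((Q + 1) * L) := by ring
  have hQN : N / L * L ≤ N := Nat.div_mul_le_self N L
  have hNQ : N - N / L * L ≤ L := by
    have := Nat.lt_div_mul_add (a := N) hL
    omega
  set Q := N / L
  rw [hsplit hQN]
  calc _ ≤ |∑ n ∈ range (Q * L), f n| + |∑ n ∈ Ico (Q * L) N, f n| := abs_add_le _ _
    _ ≤ (L * M + ε * (Q * L : ℕ)) + ((N - Q * L : ℕ) : ℝ) * M :=
        add_le_add (hmult Q) (abs_sum_Ico_le_mul hM _ _)
    _ ≤ 2 * L * M + ε * N := by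
        have h1 : ((N - Q * L : ℕ) : ℝ) ≤ L := by exact_mod_cast hNQ
        have h2 : ((Q * L : ℕ) : ℝ) ≤ N := by exact_mod_cast hQN
        nlinarith

theorem tendsto_sum_range_div_of_block_sums (hM : ∀ n, |f n| ≤ M)
    (h : ∀ ε > 0, ∃ L : ℕ, 1 ≤ L ∧ ∀ q ≥ 1, |∑ n ∈ Ico (q * L) ((q + 1) * L), f n| ≤ ε * L) :
    Tendsto (fun N : ℕ => (∑ n ∈ range N, f n) / N) atTop (𝓝 0) := by
  rw [Metric.tendsto_atTop]
  intro ε hε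
  obtain ⟨L, hL, hblock⟩ := h (ε / 2) (half_pos hε)
  obtain ⟨N₀, hN₀⟩ := exists_nat_gt (4 * L * M / ε)
  refine ⟨N₀ + 1, fun N hN => ?_⟩
  have hNpos : (0 : ℝ) < N := by exact_mod_cast (Nat.succ_pos N₀).trans_le hN
  have hN₀N : 4 * L * M / ε < N := hN₀.trans (by exact_mod_cast Nat.lt_of_succ_le hN)
  rw [div_lt_iff₀ hε] at hN₀N
  have hbound := abs_sum_range_le_of_block_sums hM (half_pos hε).le hL hblock N
  rw [Real.dist_eq, sub_zero, abs_div, Nat.abs_cast, div_lt_iff₀ hNpos]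
  nlinarith

end Averages

namespace GenRudinShapiro

def DigitRecursion (k : ℕ) (g : ℕ → ℤ → ℤ) (a : ℕ → ℤ) : Prop :=
  ∀ n : ℕ, 1 ≤ n → ∀ j : ℕ, j < k → a (n * k + j) = a n + g j (n : ℤ)

def shiftDiff (k : ℕ) (a : ℕ → ℤ) (e n : ℕ) : ZMod k := (a (n + e) : ZMod k) - a n

def carryTerm (k : ℕ) (g : ℕ → ℤ → ℤ) (e c c' : ℕ) : ZMod k :=
  ((g ((c + e) % k) ((c' + (c + e) / k : ℕ) : ℤ) - g c c' : ℤ) : ZMod k)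

def blockCount (k : ℕ) (a : ℕ → ℤ) (s q e c : ℕ) (t : ZMod k) : ℕ :=
  #{m ∈ Ico (q * k ^ s) ((q + 1) * k ^ s) | shiftDiff k a e (m * k + c) = t}

variable {k : ℕ} {g : ℕ → ℤ → ℤ} {a : ℕ → ℤ}

theorem _root_.Admissible.apply_natCast_add_mod (hg : Admissible k g) (j m w : ℕ) :
    g j ((m + w : ℕ) : ℤ) = g j ((m % k + w : ℕ) : ℤ) := by
  have hper : Function.Periodic (g j) k := hg.1 j
  conv_lhs => rw [← Nat.mod_add_div' m k]
  rw [add_right_comm, Nat.cast_add, Nat.cast_mul]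
  exact hper.nat_mul (m / k) _

theorem _root_.Admissible.card_filter_range_eq_one (hg : Admissible k g) {u i : ℕ}
    (hi : 0 < i) (hui : u + i < k) (t : ZMod k) :
    #{c ∈ range k | ((g (u + i) (c : ℕ) - g u (c : ℕ) : ℤ) : ZMod k) = t} = 1 := by
  have : NeZero k := ⟨by omega⟩
  set φ : ℕ → ZMod k := fun c => ((g (u + i) c - g u c : ℤ) : ZMod k)
  have hsurj : Set.SurjOn φ (range k) (univ : Finset (ZMod k)) := by
    intro x _
    obtain ⟨c, hc, hcx⟩ := hg.2 u i hi (by omega) x.val x.val_lt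
    refine ⟨c, mem_range.2 hc, ?_⟩
    simp only [φ]
    rw [← ZMod.intCast_mod, hcx, Int.cast_natCast, ZMod.natCast_zmod_val]
  have hinj : Set.InjOn φ (range k) :=
    injOn_of_surjOn_of_card_le φ (fun _ _ => mem_coe.2 (mem_univ _)) hsurj (by simp)
  obtain ⟨c, hc, hct⟩ := hsurj (mem_coe.2 (mem_univ t))
  refine card_eq_one.2 ⟨c, eq_singleton_iff_unique_mem.2 ⟨mem_filter.2 ⟨hc, hct⟩, ?_⟩⟩
  intro c' hc'
  rw [mem_filter] at hc'
  exact hinj (mem_coe.2 hc'.1) hc (hc'.2.trans hct.symm)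

theorem shiftDiff_mul_add (hg : Admissible k g) (ha : DigitRecursion k g a) {m c : ℕ}
    (hm : 1 ≤ m) (hc : c < k) (e : ℕ) :
    shiftDiff k a e (m * k + c) = shiftDiff k a ((c + e) / k) m + carryTerm k g e c (m % k) := by
  have hk : 0 < k := by omega
  have hsplit : m * k + c + e = (m + (c + e) / k) * k + (c + e) % k := by
    have := Nat.div_add_mod' (c + e) k
    nlinarith
  have hgc : g c m = g c (m % k : ℕ) := by simpa using hg.apply_natCast_add_mod c m 0
  simp only [shiftDiff, carryTerm]
  rw [hsplit, ha _ (hm.trans (Nat.le_add_right _ _)) _ (Nat.mod_lt _ hk), ha m hm c hc,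
    hg.apply_natCast_add_mod, hgc]
  push_cast
  ring

theorem blockCount_succ (hg : Admissible k g) (ha : DigitRecursion k g a) {q : ℕ} (hq : 1 ≤ q)
    (s e : ℕ) {c : ℕ} (hc : c < k) (t : ZMod k) :
    blockCount k a (s + 1) q e c t =
      ∑ c' ∈ range k, blockCount k a s q ((c + e) / k) c' (t - carryTerm k g e c c') := by
  have hk : 0 < k := by omega
  have hrec : ∀ m ∈ Ico (q * k ^ (s + 1)) ((q + 1) * k ^ (s + 1)),
      shiftDiff k a e (m * k + c) = t ↔
        shiftDiff k a ((c + e) / k) m + carryTerm k g e c (m % k) = t := by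
    intro m hm
    have : 1 ≤ q * k ^ (s + 1) := Nat.one_le_iff_ne_zero.2 (by positivity)
    rw [shiftDiff_mul_add hg ha (this.trans (mem_Ico.1 hm).1) hc]
  rw [blockCount, filter_congr hrec, pow_succ, ← mul_assoc, ← mul_assoc,
    card_filter_Ico_mul_eq_sum hk]
  refine sum_congr rfl fun c' hc' => ?_
  simp only [blockCount, Nat.mul_add_mod_of_lt (mem_range.1 hc'), eq_sub_iff_add_eq]

theorem blockCount_zero_shift (s q c : ℕ) (t : ZMod k) :
    blockCount k a s q 0 c t = if t = 0 then k ^ s else 0 := by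
  have hzero : ∀ n, shiftDiff k a 0 n = 0 := by simp [shiftDiff]
  split_ifs with ht
  · simpa [blockCount, hzero, ht] using Nat.card_Ico_mul_succ_mul q (k ^ s)
  · simp [blockCount, hzero, Ne.symm ht]

theorem blockCount_le (s q e c : ℕ) (t : ZMod k) : blockCount k a s q e c t ≤ k ^ s :=
  (card_filter_le _ _).trans (Nat.card_Ico_mul_succ_mul q _).le

theorem blockCount_succ_of_add_lt (hg : Admissible k g) (ha : DigitRecursion k g a) {q : ℕ}
    (hq : 1 ≤ q) (s : ℕ) {e c : ℕ} (he : 0 < e) (hce : c + e < k) (t : ZMod k) :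
    blockCount k a (s + 1) q e c t = k ^ s := by
  have hcarry : ∀ c', carryTerm k g e c c' = ((g (c + e) c' - g c c' : ℤ) : ZMod k) := by
    simp [carryTerm, Nat.mod_eq_of_lt hce, Nat.div_eq_of_lt hce]
  rw [blockCount_succ hg ha hq s e (by omega) t, Nat.div_eq_of_lt hce]
  simp only [blockCount_zero_shift, sub_eq_zero, hcarry, eq_comm (a := t)]
  rw [← sum_filter, sum_const, smul_eq_mul, hg.card_filter_range_eq_one he hce, one_mul]

theorem abs_blockCount_sub_le (hg : Admissible k g) (ha : DigitRecursion k g a) (hk : 2 ≤ k)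
    {q : ℕ} (hq : 1 ≤ q) (s : ℕ) {e c : ℕ} (he : 1 ≤ e) (hc : c < k) (t : ZMod k) :
    |(blockCount k a (s + 1) q e c t : ℤ) - k ^ s| ≤ k ^ e := by
  have hk_le_pow : ∀ {e : ℕ}, 1 ≤ e → (k : ℤ) ≤ k ^ e := fun he =>
    mod_cast Nat.le_self_pow (by omega) k
  induction s generalizing e c t with
  | zero =>
    have hle : (blockCount k a 1 q e c t : ℤ) ≤ k := by
      exact_mod_cast (blockCount_le 1 q e c t).trans (pow_one k).le
    have := hk_le_pow he
    rw [pow_zero, abs_sub_le_iff]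
    constructor <;> linarith
  | succ s ih =>
    by_cases hce : c + e < k
    · rw [blockCount_succ_of_add_lt hg ha hq _ (by omega) hce]
      simp
    set e' := (c + e) / k with he'
    have he'_pos : 1 ≤ e' := (Nat.one_le_div_iff (by omega)).2 (by omega)
    have he'_le : e' ≤ e := Nat.div_le_of_le_mul (by nlinarith)
    set x : ℕ → ℤ := fun c' => blockCount k a (s + 1) q e' c' (t - carryTerm k g e c c')
    have hsum : |(blockCount k a (s + 2) q e c t : ℤ) - k ^ (s + 1)| ≤
        ∑ c' ∈ range k, |x c' - k ^ s| := by
      rw [blockCount_succ hg ha hq _ _ hc, Nat.cast_sum, ← he']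
      have := abs_sum_sub_card_mul_le (range k) x (k ^ s)
      rwa [card_range, ← pow_succ'] at this
    refine hsum.trans ?_
    rcases he'_le.lt_or_eq with he'_lt | he'_eq
    · calc ∑ c' ∈ range k, |x c' - k ^ s| ≤ ∑ _c' ∈ range k, (k : ℤ) ^ e' :=
            sum_le_sum fun c' hc' => ih he'_pos (mem_range.1 hc') _
        _ = k ^ (e' + 1) := by simp [pow_succ, mul_comm]
        _ ≤ k ^ e := pow_le_pow_right₀ (by omega) he'_lt
    · have he1 : e = 1 := by
        by_contra
        have hmul : e' * k ≤ c + e := Nat.div_mul_le_self _ _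
        rw [he'_eq] at hmul
        have he2 : 2 ≤ e := by omega
        nlinarith
      have hexact : ∀ c' ∈ range (k - 1), |x c' - k ^ s| = 0 := by
        intro c' hc'
        have : c' + e' < k := by rw [mem_range] at hc'; omega
        simp [x, blockCount_succ_of_add_lt hg ha hq s he'_pos this]
      have hlast := sum_range_succ (fun c' => |x c' - k ^ s|) (k - 1)
      rw [Nat.sub_add_cancel (by omega)] at hlast
      rw [hlast, sum_eq_zero hexact, zero_add, he1, pow_one]
      exact (ih he'_pos (by omega) _).trans (by rw [he'_eq, he1, pow_one])

theorem abs_card_block_sub_le (hg : Admissible k g) (ha : DigitRecursion k g a) (hk : 2 ≤ k)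
    {q : ℕ} (hq : 1 ≤ q) (s : ℕ) {e : ℕ} (he : 1 ≤ e) (t : ZMod k) :
    |(#{n ∈ Ico (q * k ^ (s + 2)) ((q + 1) * k ^ (s + 2)) | shiftDiff k a e n = t} : ℤ) -
      k ^ (s + 1)| ≤ k ^ (e + 1) := by
  have hdecomp : #{n ∈ Ico (q * k ^ (s + 2)) ((q + 1) * k ^ (s + 2)) | shiftDiff k a e n = t} =
      ∑ c ∈ range k, blockCount k a (s + 1) q e c t := by
    rw [pow_succ _ (s + 1), ← mul_assoc, ← mul_assoc]
    exact card_filter_Ico_mul_eq_sum (by omega) _ _ _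
  rw [hdecomp, Nat.cast_sum]
  calc _ ≤ ∑ c ∈ range k, |(blockCount k a (s + 1) q e c t : ℤ) - k ^ s| := by
        have := abs_sum_sub_card_mul_le (range k)
          (fun c => (blockCount k a (s + 1) q e c t : ℤ)) (k ^ s)
        rwa [card_range, ← pow_succ'] at this
    _ ≤ ∑ _c ∈ range k, (k : ℤ) ^ e :=
        sum_le_sum fun c hc => abs_blockCount_sub_le hg ha hk hq s he (mem_range.1 hc) t
    _ = k ^ (e + 1) := by simp [pow_succ, mul_comm]

theorem tendsto_card_shiftDiff_div (hg : Admissible k g) (ha : DigitRecursion k g a) (hk : 2 ≤ k)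
    {e : ℕ} (he : 1 ≤ e) (t : ZMod k) :
    Tendsto (fun N : ℕ => (#{n ∈ range N | shiftDiff k a e n = t} : ℝ) / N) atTop
      (𝓝 (1 / k)) := by
  set f : ℕ → ℝ := fun n => (if shiftDiff k a e n = t then 1 else 0) - 1 / k
  have hkR : (1 : ℝ) < k := by exact_mod_cast hk
  have hinv : 0 < 1 / (k : ℝ) ∧ 1 / (k : ℝ) ≤ 1 :=
    ⟨by positivity, (div_le_one (by positivity)).2 hkR.le⟩
  have hf : ∀ n, |f n| ≤ 1 := fun n => by
    simp only [f]
    split_ifs <;> rw [abs_le] <;> constructor <;> linarith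
  have hblock : ∀ ε > 0, ∃ L : ℕ, 1 ≤ L ∧
      ∀ q ≥ 1, |∑ n ∈ Ico (q * L) ((q + 1) * L), f n| ≤ ε * L := by
    intro ε hε
    obtain ⟨s, hs⟩ := pow_unbounded_of_one_lt ((k : ℝ) ^ (e + 1) / ε) hkR
    refine ⟨k ^ (s + 2), Nat.one_le_pow _ _ (by omega), fun q hq => ?_⟩
    have hsum : ∑ n ∈ Ico (q * k ^ (s + 2)) ((q + 1) * k ^ (s + 2)), f n =
        (#{n ∈ Ico (q * k ^ (s + 2)) ((q + 1) * k ^ (s + 2)) | shiftDiff k a e n = t} : ℝ) -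
          (k : ℝ) ^ (s + 1) := by
      simp only [f, sum_sub_distrib, sum_boole, sum_const, Nat.card_Ico_mul_succ_mul,
        nsmul_eq_mul]
      push_cast
      field_simp
      ring
    have hcount : |(#{n ∈ Ico (q * k ^ (s + 2)) ((q + 1) * k ^ (s + 2)) |
        shiftDiff k a e n = t} : ℝ) - (k : ℝ) ^ (s + 1)| ≤ (k : ℝ) ^ (e + 1) := by
      exact_mod_cast abs_card_block_sub_le hg ha hk hq s he t
    rw [hsum, Nat.cast_pow]
    rw [div_lt_iff₀ hε] at hs
    have : (k : ℝ) ^ s ≤ (k : ℝ) ^ (s + 2) := pow_le_pow_right₀ hkR.le (by omega)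
    nlinarith
  rw [← tendsto_sub_nhds_zero_iff]
  refine (tendsto_sum_range_div_of_block_sums hf hblock).congr' ?_
  filter_upwards [eventually_ne_atTop 0] with N hN
  simp only [f, sum_sub_distrib, sum_boole, sum_const, card_range, nsmul_eq_mul]
  field_simp

variable {ahat : ℕ → ℕ}

theorem _root_.IsGenRudinShapiro.shiftDiff_eq_zero_iff (ha : IsGenRudinShapiro k g a ahat)
    (r n : ℕ) : shiftDiff k a r n = 0 ↔ ahat n = ahat (n + r) := by
  have hcast : ∀ m, ((ahat m : ℕ) : ZMod k) = (a m : ZMod k) := fun m => by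
    rw [← Int.cast_natCast, ZMod.intCast_eq_intCast_iff']
    exact ha.2.1 m
  rw [shiftDiff, sub_eq_zero, ← hcast, ← hcast, ZMod.natCast_eq_natCast_iff',
    Nat.mod_eq_of_lt (ha.1 _), Nat.mod_eq_of_lt (ha.1 _), eq_comm]

theorem _root_.IsGenRudinShapiro.sum_mismatch_eq (ha : IsGenRudinShapiro k g a ahat)
    (r N : ℕ) :
    ∑ n ∈ range N, (if ahat n = ahat (n + r) then (0 : ℝ) else 1) =
      N - #{n ∈ range N | shiftDiff k a r n = 0} := by
  have hterm : ∀ n, (if ahat n = ahat (n + r) then (0 : ℝ) else 1) =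
      1 - if shiftDiff k a r n = 0 then 1 else 0 := fun n => by
    simp only [← ha.shiftDiff_eq_zero_iff r n]
    split_ifs <;> norm_num
  simp only [hterm, sum_sub_distrib, sum_const, card_range, nsmul_eq_mul, mul_one, sum_boole]

end GenRudinShapiro

/-- For `k` prime and a generalized Rudin–Shapiro sequence `â` over
`{0,…,k-1}`, `inf_{r>0} C_{(0,r)} = 1 - 1/k`, where
`C_{(0,r)} = liminf_{N→∞} (1/N) Σ_{n<N} δ(n, n+r)`. -/
theorem genRudinShapiro_inf_correlation
    (k : ℕ) (hk : k.Prime) (g : ℕ → ℤ → ℤ) (a : ℕ → ℤ) (ahat : ℕ → ℕ)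
    (hg : Admissible k g) (ha : IsGenRudinShapiro k g a ahat) :
    sInf {y : ℝ | ∃ r : ℕ, 0 < r ∧
        y = Filter.liminf (fun N : ℕ =>
          (∑ n ∈ Finset.range N, (if ahat n = ahat (n + r) then (0 : ℝ) else 1)) / N)
          Filter.atTop}
      = 1 - 1 / (k : ℝ) := by
  have hlim : ∀ r : ℕ, 0 < r → Tendsto (fun N : ℕ =>
      (∑ n ∈ range N, (if ahat n = ahat (n + r) then (0 : ℝ) else 1)) / N) atTop
      (𝓝 (1 - 1 / (k : ℝ))) := by
    intro r hr
    have hdensity := GenRudinShapiro.tendsto_card_shiftDiff_div hg ha.2.2 hk.two_le hr 0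
    refine (hdensity.const_sub 1).congr' ?_
    filter_upwards [eventually_ne_atTop 0] with N hN
    rw [ha.sum_mismatch_eq, sub_div, div_self (by exact_mod_cast hN)]
  have hset : {y : ℝ | ∃ r : ℕ, 0 < r ∧ y = liminf (fun N : ℕ =>
      (∑ n ∈ range N, (if ahat n = ahat (n + r) then (0 : ℝ) else 1)) / N) atTop} =
      {1 - 1 / (k : ℝ)} := by
    ext y
    constructor
    · rintro ⟨r, hr, rfl⟩
      exact (hlim r hr).liminf_eq
    · rintro rfl
      exact ⟨1, one_pos, (hlim 1 one_pos).liminf_eq.symm⟩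
  rw [hset, csInf_singleton]
end
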